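/- (Momentum point of accelerated proximal gradient stays near the subproblem optimum.) Let H be a real Hilbert space and Q : H → ℝ ∪ {+∞} an m-strongly convex, proper, lower semicontinuous function with m > 0, Q(0) = 0, unique minimizer p*, and optimal value Q* = Q(p*) ≤ 0. Suppose a, b ∈ H satisfy Q(a) − Q* ≤ η (−Q*) and Q(b) − Q* ≤ η (−Q*) for some η ≥ 0, and let y = a + κ (a − b) for some κ ∈ [0, 1]. Then ‖y − p*‖ ≤ 3 √(2η/m) √(−Q*). -/

import Mathlib

open Metric Filter

/-- `m`-strong convexity for an extended-real-valued function. -/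
def StronglyConvexEReal {H : Type*} [NormedAddCommGroup H] [InnerProductSpace ℝ H]
    (m : ℝ) (Q : H → EReal) : Prop :=
  ∀ x y : H, ∀ a b : ℝ, 0 ≤ a → 0 ≤ b → a + b = 1 →
    Q (a • x + b • y) ≤
      (a : EReal) * Q x + (b : EReal) * Q y - ((m / 2 * a * b * ‖x - y‖ ^ 2 : ℝ) : EReal)

/-!
Comparing `Q p*` with strong convexity along the segment from `z` to `p*` and letting the
weight of `z` tend to `0` gives the quadratic growth `m/2 ‖z - p*‖² ≤ Q z - Q*`. Hence every
`η`-inexact point lies within `√(2η/m) √(-Q*)` of `p*`, and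
`y - p* = (1 + κ)(a - p*) - κ(b - p*)` is within `(1 + 2κ)` times that radius.
-/

open Topology

theorem le_of_forall_one_sub_mul_le {c B : ℝ}
    (h : ∀ l ∈ Set.Ioo (0 : ℝ) 1, (1 - l) * c ≤ B) : c ≤ B := by
  have hlim : Tendsto (fun l : ℝ => (1 - l) * c) (𝓝[>] 0) (𝓝 c) := by
    have : Continuous fun l : ℝ => (1 - l) * c := by fun_prop
    simpa using (this.tendsto 0).mono_left nhdsWithin_le_nhds
  exact le_of_tendsto hlim (eventually_of_mem (Ioo_mem_nhdsGT one_pos) h)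

namespace StronglyConvexEReal

variable {H : Type*} [NormedAddCommGroup H] [InnerProductSpace ℝ H] {m : ℝ} {Q : H → EReal}

theorem sq_norm_sub_le (hQ : StronglyConvexEReal m Q) (hQ_nebot : ∀ z, Q z ≠ ⊥)
    {p : H} {q : ℝ} (hp : ∀ z, Q p ≤ Q z) (hq : Q p = q) (z : H) :
    ((m / 2 * ‖z - p‖ ^ 2 : ℝ) : EReal) ≤ Q z - Q p := by
  rw [hq]
  obtain hz | hz := eq_or_ne (Q z) ⊤
  · simp [hz]
  lift Q z to ℝ using ⟨hz, hQ_nebot z⟩ with qz hqz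
  rw [← EReal.coe_sub, EReal.coe_le_coe_iff]
  refine le_of_forall_one_sub_mul_le fun l ⟨hl0, hl1⟩ => ?_
  have hseg := (hp _).trans (hQ z p l (1 - l) hl0.le (by linarith) (by ring))
  rw [← hqz, hq, ← EReal.coe_mul, ← EReal.coe_mul, ← EReal.coe_add, ← EReal.coe_sub,
    EReal.coe_le_coe_iff] at hseg
  nlinarith

theorem norm_sub_le_of_sub_le_mul (hQ : StronglyConvexEReal m Q) (hQ_nebot : ∀ z, Q z ≠ ⊥)
    (hm : 0 < m) {p : H} {q : ℝ} (hp : ∀ z, Q p ≤ Q z) (hq : Q p = q)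
    {η : ℝ} (hη : 0 ≤ η)
    {z : H} (hz : Q z - Q p ≤ (η : EReal) * -(Q p)) :
    ‖z - p‖ ≤ √(2 * η / m) * √(-q) := by
  have hgrowth := (hQ.sq_norm_sub_le hQ_nebot hp hq z).trans hz
  rw [hq, ← EReal.coe_neg, ← EReal.coe_mul, EReal.coe_le_coe_iff] at hgrowth
  rw [← Real.sqrt_mul (by positivity)]
  refine Real.le_sqrt_of_sq_le ?_
  rw [div_mul_eq_mul_div, le_div_iff₀ hm]
  linarith

end StronglyConvexEReal

theorem norm_add_smul_sub_sub_le {E : Type*} [SeminormedAddCommGroup E] [NormedSpace ℝ E]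
    {a b p : E} {r κ : ℝ} (ha : ‖a - p‖ ≤ r) (hb : ‖b - p‖ ≤ r) (hκ : 0 ≤ κ) :
    ‖a + κ • (a - b) - p‖ ≤ (1 + 2 * κ) * r := by
  calc ‖a + κ • (a - b) - p‖ = ‖(1 + κ) • (a - p) - κ • (b - p)‖ := by
        congr 1; module
    _ ≤ (1 + κ) * ‖a - p‖ + κ * ‖b - p‖ := by
      grw [norm_sub_le, norm_smul, norm_smul, Real.norm_of_nonneg hκ,
        Real.norm_of_nonneg (by linarith)]
    _ ≤ (1 + 2 * κ) * r := by nlinarith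

theorem statement16_general
    {H : Type*} [NormedAddCommGroup H] [InnerProductSpace ℝ H]
    (Q : H → EReal) (m η κ Qstar : ℝ) (pstar a b : H)
    (hm : 0 < m)
    (hQ_sc : StronglyConvexEReal m Q)
    -- Q : H → ℝ ∪ {+∞} proper (never −∞, finite somewhere)
    (hQ_nebot : ∀ z : H, Q z ≠ ⊥)
    -- p* is the (unique) minimizer of Q, with optimal value Q* = Q(p*) ≤ 0
    (hpstar : ∀ z : H, Q pstar ≤ Q z)
    (hQstar : Q pstar = (Qstar : EReal))
    -- multiplicative inexactness at a and b, with η ≥ 0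
    (hη : 0 ≤ η)
    (ha : Q a - Q pstar ≤ (η : EReal) * -(Q pstar))
    (hb : Q b - Q pstar ≤ (η : EReal) * -(Q pstar))
    -- extrapolation coefficient κ ∈ [0,1]
    (hκ0 : 0 ≤ κ) (hκ1 : κ ≤ 1) :
    ‖a + κ • (a - b) - pstar‖ ≤ 3 * Real.sqrt (2 * η / m) * Real.sqrt (-Qstar) := by
  have hnear (z : H) := hQ_sc.norm_sub_le_of_sub_le_mul hQ_nebot hm hpstar hQstar hη (z := z)
  have hr : 0 ≤ √(2 * η / m) * √(-Qstar) := by positivity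
  calc ‖a + κ • (a - b) - pstar‖ ≤ (1 + 2 * κ) * (√(2 * η / m) * √(-Qstar)) :=
        norm_add_smul_sub_sub_le (hnear a ha) (hnear b hb) hκ0
    _ ≤ 3 * √(2 * η / m) * √(-Qstar) := by rw [mul_assoc]; gcongr; linarith

/-- the momentum point of accelerated proximal gradient stays near the
subproblem optimum: if `Q(a) − Q* ≤ η(−Q*)` and `Q(b) − Q* ≤ η(−Q*)`, then the
extrapolated point `y = a + κ(a − b)` with `κ ∈ [0,1]` satisfies
`‖y − p*‖ ≤ 3 √(2η/m) √(−Q*)`. -/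
theorem statement16
    {H : Type*} [NormedAddCommGroup H] [InnerProductSpace ℝ H] [CompleteSpace H]
    (Q : H → EReal) (m η κ Qstar : ℝ) (pstar a b : H)
    (hm : 0 < m)
    (hQ_sc : StronglyConvexEReal m Q)
    -- Q : H → ℝ ∪ {+∞} proper (never −∞, finite somewhere)
    (hQ_nebot : ∀ z : H, Q z ≠ ⊥)
    (hQ_proper : ∃ z : H, Q z ≠ ⊤)
    (hQ_lsc : LowerSemicontinuous Q)
    -- Q(0) = 0
    (hQ0 : Q 0 = 0)
    -- p* is the (unique) minimizer of Q, with optimal value Q* = Q(p*) ≤ 0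
    (hpstar : ∀ z : H, Q pstar ≤ Q z)
    (hQstar : Q pstar = (Qstar : EReal))
    (hQstar_le : Qstar ≤ 0)
    -- multiplicative inexactness at a and b, with η ≥ 0
    (hη : 0 ≤ η)
    (ha : Q a - Q pstar ≤ (η : EReal) * -(Q pstar))
    (hb : Q b - Q pstar ≤ (η : EReal) * -(Q pstar))
    -- extrapolation coefficient κ ∈ [0,1]
    (hκ0 : 0 ≤ κ) (hκ1 : κ ≤ 1) :
    ‖a + κ • (a - b) - pstar‖ ≤ 3 * Real.sqrt (2 * η / m) * Real.sqrt (-Qstar) :=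
  statement16_general Q m η κ Qstar pstar a b hm hQ_sc hQ_nebot hpstar hQstar hη ha hb hκ0 hκ1
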